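/- arXiv:2203.08369 — 5 statements merged into one kernel-verified Lean document; each statement's English description precedes it below -/
import Mathlib

section
/- Let d > 0, K > 0, Δ(r,c) = d(e^r + e^{-r} - 2) - c·r + K, and let c* > 0, r* > 0 satisfy Δ(r*,c*) = 0 and d(e^{r*} - e^{-r*}) = c*. Then for every c with 0 < c < c*, Δ(r,c) > 0 for all r ∈ ℝ. -/
theorem stmt_4 (d K cstar rstar : ℝ) (hd : 0 < d) (hK : 0 < K)
    (hcs : 0 < cstar) (hrs : 0 < rstar)
    (hcrit : d * (Real.exp rstar + Real.exp (-rstar) - 2) - cstar * rstar + K = 0)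
    (hder : d * (Real.exp rstar - Real.exp (-rstar)) = cstar) :
    ∀ c : ℝ, 0 < c → c < cstar →
      ∀ r : ℝ, 0 < d * (Real.exp r + Real.exp (-r) - 2) - c * r + K := by
  intro c hc hcc r
  have e1 : Real.exp rstar * ((r - rstar) + 1) ≤ Real.exp r := by
    have h : Real.exp rstar * Real.exp (r - rstar) = Real.exp r := by
      rw [← Real.exp_add]; ring_nf
    calc Real.exp rstar * ((r - rstar) + 1) ≤ Real.exp rstar * Real.exp (r - rstar) :=
          mul_le_mul_of_nonneg_left (Real.add_one_le_exp _) (Real.exp_pos _).le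
      _ = Real.exp r := h
  have e2 : Real.exp (-rstar) * (-(r - rstar) + 1) ≤ Real.exp (-r) := by
    have h : Real.exp (-rstar) * Real.exp (-(r - rstar)) = Real.exp (-r) := by
      rw [← Real.exp_add]; ring_nf
    calc Real.exp (-rstar) * (-(r - rstar) + 1)
        ≤ Real.exp (-rstar) * Real.exp (-(r - rstar)) :=
          mul_le_mul_of_nonneg_left (Real.add_one_le_exp _) (Real.exp_pos _).le
      _ = Real.exp (-r) := h
  rcases le_or_gt r 0 with hr | hr
  · nlinarith [Real.add_one_le_exp r, Real.add_one_le_exp (-r), mul_nonneg hc.le (neg_nonneg.mpr hr)]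
  · nlinarith [mul_le_mul_of_nonneg_left e1 hd.le, mul_le_mul_of_nonneg_left e2 hd.le,
      mul_pos (sub_pos.mpr hcc) hr]
end

section
/- Let d > 0, K > 0, Δ(r,c) = d(e^r + e^{-r} - 2) - c·r + K, and let (r*, c*) satisfy Δ(r*,c*) = 0 and d(e^{r*} - e^{-r*}) = c*. Then for every c > c*, the equation Δ(r,c) = 0 has exactly two positive real roots r₁ < r₂, and they satisfy r₁ < r* < r₂. -/
/-!
For fixed `c`, `Δ(·, c)` is strictly convex. Increasing the speed from `c*` to `c` lowers
`Δ(r*, ·)` below its critical value `0`, while `Δ(0, c) = K > 0` and `Δ(r, c)` grows like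
`d r²` for large `r`. The intermediate value theorem gives a root on each side of `r*`, and a
strictly convex function cannot vanish at three points.
-/

open Real Set

noncomputable def dispersion (d K c r : ℝ) : ℝ :=
  d * (exp r + exp (-r) - 2) - c * r + K

theorem StrictConvexOn.map_lt_of_mem_Ioo {s : Set ℝ} {f : ℝ → ℝ} (hf : StrictConvexOn ℝ s f)
    {x y z : ℝ} (hx : x ∈ s) (hz : z ∈ s) (hy : y ∈ Ioo x z) (hfxz : f x = f z) :
    f y < f x := by
  have hxz : x < z := hy.1.trans hy.2
  have := hf.lt_on_openSegment hx hz hxz.ne (by rwa [openSegment_eq_Ioo hxz])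
  rwa [hfxz, max_self, ← hfxz] at this

theorem StrictConvexOn.eq_or_eq_of_map_eq {s : Set ℝ} {f : ℝ → ℝ} (hf : StrictConvexOn ℝ s f)
    {x y z : ℝ} (hx : x ∈ s) (hy : y ∈ s) (hz : z ∈ s) (hxy : x < y)
    (hfy : f y = f x) (hfz : f z = f x) : z = x ∨ z = y := by
  by_contra! hne
  rcases hne.1.lt_or_gt with hzx | hxz
  · have := hf.map_lt_of_mem_Ioo hz hy ⟨hzx, hxy⟩ (hfz.trans hfy.symm)
    linarith
  rcases hne.2.lt_or_gt with hzy | hyz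
  · have := hf.map_lt_of_mem_Ioo hx hy ⟨hxz, hzy⟩ hfy.symm
    linarith
  · have := hf.map_lt_of_mem_Ioo hx hz ⟨hxy, hyz⟩ hfz.symm
    linarith

theorem strictConvexOn_exp_neg : StrictConvexOn ℝ univ fun r : ℝ => exp (-r) := by
  refine ⟨convex_univ, fun x _ y _ hxy a b ha hb hab => ?_⟩
  simpa only [smul_eq_mul, mul_neg, neg_add] using
    strictConvexOn_exp.2 (mem_univ (-x)) (mem_univ (-y)) (neg_injective.ne hxy) ha hb hab

section Dispersion

variable {d K c : ℝ}

theorem strictConvexOn_dispersion (hd : 0 < d) : StrictConvexOn ℝ univ (dispersion d K c) := by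
  refine ⟨convex_univ, fun x _ y _ hxy a b ha hb hab => ?_⟩
  have hcosh := (strictConvexOn_exp.add strictConvexOn_exp_neg).2
    (mem_univ x) (mem_univ y) hxy ha hb hab
  simp only [dispersion, smul_eq_mul, Pi.add_apply] at hcosh ⊢
  obtain rfl : b = 1 - a := by linarith
  -- the affine part `-c r + K - 2d` commutes with convex combinations
  have hgap := mul_pos hd (sub_pos.2 hcosh)
  nlinarith

theorem continuous_dispersion : Continuous (dispersion d K c) := by
  unfold dispersion
  fun_prop

theorem dispersion_zero : dispersion d K c 0 = K := by
  norm_num [dispersion]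

theorem dispersion_lt_of_lt {r c' : ℝ} (hr : 0 < r) (hc : c' < c) :
    dispersion d K c r < dispersion d K c' r := by
  unfold dispersion
  nlinarith

theorem dispersion_pos_of_le (hd : 0 < d) (hK : 0 < K) {R : ℝ} (hR : 0 ≤ R)
    (hc : c ≤ d * R / 2) : 0 < dispersion d K c R := by
  have hcosh : R ^ 2 / 2 ≤ exp R + exp (-R) - 2 := by
    linarith [quadratic_le_exp_of_nonneg hR, add_one_le_exp (-R)]
  have := mul_le_mul_of_nonneg_left hcosh hd.le
  unfold dispersion
  nlinarith

end Dispersion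

theorem stmt_5_general (d K cstar rstar : ℝ) (hd : 0 < d) (hK : 0 < K)
    (hrs : 0 < rstar)
    (hcrit : d * (Real.exp rstar + Real.exp (-rstar) - 2) - cstar * rstar + K = 0) :
    ∀ c : ℝ, cstar < c →
      ∃ r₁ r₂ : ℝ, 0 < r₁ ∧ r₁ < rstar ∧ rstar < r₂ ∧
        d * (Real.exp r₁ + Real.exp (-r₁) - 2) - c * r₁ + K = 0 ∧
        d * (Real.exp r₂ + Real.exp (-r₂) - 2) - c * r₂ + K = 0 ∧
        ∀ r : ℝ, 0 < r → d * (Real.exp r + Real.exp (-r) - 2) - c * r + K = 0 →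
          r = r₁ ∨ r = r₂ := by
  intro c hc
  have hneg : dispersion d K c rstar < 0 := (dispersion_lt_of_lt hrs hc).trans_eq hcrit
  have hcont : Continuous (dispersion d K c) := continuous_dispersion
  obtain ⟨r₁, ⟨hr₁pos, hr₁⟩, hr₁root⟩ :=
    intermediate_value_Ioo' hrs.le hcont.continuousOn ⟨hneg, dispersion_zero.symm ▸ hK⟩
  have hfar : 0 < dispersion d K c (rstar + 2 * |c| / d) := by
    refine dispersion_pos_of_le hd hK (by positivity) ?_
    rw [mul_add, mul_div_cancel₀ _ hd.ne']
    nlinarith [le_abs_self c]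
  obtain ⟨r₂, ⟨hr₂, -⟩, hr₂root⟩ :=
    intermediate_value_Ioo (le_add_of_nonneg_right (by positivity)) hcont.continuousOn ⟨hneg, hfar⟩
  refine ⟨r₁, r₂, hr₁pos, hr₁, hr₂, hr₁root, hr₂root, fun r _ hr => ?_⟩
  exact (strictConvexOn_dispersion hd).eq_or_eq_of_map_eq (mem_univ _) (mem_univ _)
    (mem_univ _) (hr₁.trans hr₂) (hr₂root.trans hr₁root.symm) (hr.trans hr₁root.symm)

theorem stmt_5 (d K cstar rstar : ℝ) (hd : 0 < d) (hK : 0 < K)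
    (hcs : 0 < cstar) (hrs : 0 < rstar)
    (hcrit : d * (Real.exp rstar + Real.exp (-rstar) - 2) - cstar * rstar + K = 0)
    (hder : d * (Real.exp rstar - Real.exp (-rstar)) = cstar) :
    ∀ c : ℝ, cstar < c →
      ∃ r₁ r₂ : ℝ, 0 < r₁ ∧ r₁ < rstar ∧ rstar < r₂ ∧
        d * (Real.exp r₁ + Real.exp (-r₁) - 2) - c * r₁ + K = 0 ∧
        d * (Real.exp r₂ + Real.exp (-r₂) - 2) - c * r₂ + K = 0 ∧
        ∀ r : ℝ, 0 < r → d * (Real.exp r + Real.exp (-r) - 2) - c * r + K = 0 →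
          r = r₁ ∨ r = r₂ :=
  stmt_5_general d K cstar rstar hd hK hrs hcrit
end

section
/- Suppose Λ, β₁, β₂, α, μ, γ, γ₁ > 0 and set μ₁ = α + μ, μ₂ = γ₁ + μ, μ₃ = γ + μ, S₀ = Λ/μ₁, V₀ = Λα/(μ₁μ₂), and ℜ₀ = (β₁S₀ + β₂V₀)/μ₃. If ℜ₀ > 1, then there exist positive reals S*, V*, I* satisfying Λ - β₁S*I* - μ₁S* = 0, αS* - β₂V*I* - μ₂V* = 0, and β₁S* + β₂V* = μ₃. -/
set_option maxHeartbeats 1000000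


theorem stmt_11 (Λ β₁ β₂ α μ γ γ₁ : ℝ)
    (hΛ : 0 < Λ) (hβ₁ : 0 < β₁) (hβ₂ : 0 < β₂) (hα : 0 < α) (hμ : 0 < μ)
    (hγ : 0 < γ) (hγ₁ : 0 < γ₁)
    (μ₁ : ℝ) (hμ₁ : μ₁ = α + μ) (μ₂ : ℝ) (hμ₂ : μ₂ = γ₁ + μ) (μ₃ : ℝ) (hμ₃ : μ₃ = γ + μ)
    (S₀ : ℝ) (hS₀ : S₀ = Λ / μ₁) (V₀ : ℝ) (hV₀ : V₀ = Λ * α / (μ₁ * μ₂))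
    (R₀ : ℝ) (hR₀ : R₀ = (β₁ * S₀ + β₂ * V₀) / μ₃)
    (hR : 1 < R₀) :
    ∃ Sstar Vstar Istar : ℝ, 0 < Sstar ∧ 0 < Vstar ∧ 0 < Istar ∧
      Λ - β₁ * Sstar * Istar - μ₁ * Sstar = 0 ∧
      α * Sstar - β₂ * Vstar * Istar - μ₂ * Vstar = 0 ∧
      β₁ * Sstar + β₂ * Vstar = μ₃ := by
  have hμ₁0 : 0 < μ₁ := by rw [hμ₁]; linarith
  have hμ₂0 : 0 < μ₂ := by rw [hμ₂]; linarith
  have hμ₃0 : 0 < μ₃ := by rw [hμ₃]; linarith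
  set g : ℝ → ℝ := fun I => β₁ * Λ / (β₁ * I + μ₁)
      + β₂ * α * Λ / ((β₁ * I + μ₁) * (β₂ * I + μ₂)) - μ₃ with hg
  have hD₁ : ∀ I : ℝ, 0 ≤ I → 0 < β₁ * I + μ₁ := fun I hI => by nlinarith
  have hD₂ : ∀ I : ℝ, 0 ≤ I → 0 < β₂ * I + μ₂ := fun I hI => by nlinarith
  -- g 0 > 0
  have hg0 : 0 < g 0 := by
    have hkey : μ₃ < β₁ * Λ / μ₁ + β₂ * α * Λ / (μ₁ * μ₂) := by
      have := (lt_div_iff₀ hμ₃0).mp (hR₀ ▸ hR)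
      rw [hS₀, hV₀] at this
      have h1 : β₁ * (Λ / μ₁) = β₁ * Λ / μ₁ := by ring
      have h2 : β₂ * (Λ * α / (μ₁ * μ₂)) = β₂ * α * Λ / (μ₁ * μ₂) := by ring
      linarith [this, h1 ▸ h2 ▸ this]
    simp only [hg, mul_zero, zero_add]
    linarith
  -- choose I₁ large with g I₁ < 0
  set I₁ : ℝ := Λ / μ₃ + α * Λ / (μ₃ * μ₁) + 1 with hI₁
  have hI₁pos : 0 < I₁ := by positivity
  have hgI₁ : g I₁ < 0 := by
    have d₁ := hD₁ I₁ hI₁pos.le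
    have d₂ := hD₂ I₁ hI₁pos.le
    have hsum : g I₁ = (β₁ * Λ * (β₂ * I₁ + μ₂) + β₂ * α * Λ)
        / ((β₁ * I₁ + μ₁) * (β₂ * I₁ + μ₂)) - μ₃ := by
      simp only [hg]
      field_simp
    rw [hsum, sub_neg, div_lt_iff₀ (by positivity)]
    have hA : μ₃ * I₁ = Λ + α * Λ / μ₁ + μ₃ := by
      rw [hI₁]; field_simp
    have hB : μ₁ * (μ₃ * I₁) = μ₁ * Λ + α * Λ + μ₁ * μ₃ := by
      rw [hA]; field_simp
    have h1 : Λ + μ₃ ≤ μ₃ * I₁ := by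
      rw [hA]; have : 0 < α * Λ / μ₁ := by positivity
      linarith
    have h2 : α * Λ + μ₁ * μ₃ ≤ μ₁ * (μ₃ * I₁) := by
      rw [hB]; nlinarith
    have t1 : 0 ≤ β₁ * β₂ * I₁ * (μ₃ * I₁ - Λ - μ₃) := by
      apply mul_nonneg (by positivity); linarith
    have t2 : 0 ≤ β₁ * μ₂ * (μ₃ * I₁ - Λ - μ₃) := by
      apply mul_nonneg (by positivity); linarith
    have t3 : 0 ≤ β₂ * (μ₁ * (μ₃ * I₁) - α * Λ - μ₁ * μ₃) := by
      apply mul_nonneg (by positivity); linarith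
    linarith [t1, t2, t3, mul_pos hμ₃0 (mul_pos hμ₁0 hμ₂0),
      mul_pos (mul_pos hβ₁ hβ₂) (mul_pos hμ₃0 hI₁pos),
      mul_pos hβ₁ (mul_pos hμ₂0 hμ₃0), mul_pos hβ₂ (mul_pos hμ₁0 hμ₃0)]
  -- continuity on [0, I₁]
  have hcont : ContinuousOn g (Set.Icc 0 I₁) := by
    apply ContinuousOn.sub _ continuousOn_const
    apply ContinuousOn.add
    · exact ContinuousOn.div continuousOn_const (by fun_prop)
        (fun x hx => (hD₁ x hx.1).ne')
    · exact ContinuousOn.div continuousOn_const (by fun_prop)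
        (fun x hx => (mul_pos (hD₁ x hx.1) (hD₂ x hx.1)).ne')
  have hIVT := intermediate_value_Icc' hI₁pos.le hcont
  have h0mem : (0:ℝ) ∈ Set.Icc (g I₁) (g 0) := ⟨hgI₁.le, hg0.le⟩
  obtain ⟨Istar, hImem, hgI⟩ := hIVT h0mem
  have hI0 : 0 < Istar := by
    rcases lt_or_eq_of_le hImem.1 with h | h
    · exact h
    · exfalso; rw [← h] at hgI; linarith [hgI ▸ hg0]
  have d₁ := hD₁ Istar hI0.le
  have d₂ := hD₂ Istar hI0.le
  refine ⟨Λ / (β₁ * Istar + μ₁), α * Λ / ((β₁ * Istar + μ₁) * (β₂ * Istar + μ₂)), Istar,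
    by positivity, by positivity, hI0, ?_, ?_, ?_⟩
  · field_simp [d₁.ne']; ring
  · field_simp [d₁.ne', d₂.ne']; ring
  · have hkey : β₁ * Λ / (β₁ * Istar + μ₁)
        + β₂ * α * Λ / ((β₁ * Istar + μ₁) * (β₂ * Istar + μ₂)) = μ₃ := by
      have := hgI; simp only [hg] at this; linarith
    rw [← hkey]; field_simp [d₁.ne', d₂.ne']
end

section
/- Let I : ℝ → ℝ be a differentiable positive function and let c > 0, μ₃ > 0, d > 0 with c·I'(ς) = d(I(ς+1) - 2I(ς) + I(ς-1)) + q(ς)·I(ς) - μ₃·I(ς) for all ς, where q(ς) ≥ 0. Set κ = (2d + μ₃)/c. Then the function U(ς) = e^{κς}·I(ς) satisfies U'(ς) > 0 for all ς; in particular I(ς-1)/I(ς) < e^κ for all ς. -/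
/-! With `κ = (2d + μ₃)/c` the wave equation rearranges to
`c (κ I + I') = d (I(ς+1) + I(ς-1)) + q I > 0`, and `κ I + I'` is exactly `e^{-κς} (e^{κς} I)'`.
Monotonicity of `e^{κς} I` between `ς - 1` and `ς` then gives `I(ς-1) < e^κ I(ς)`. -/

open Real

theorem hasDerivAt_exp_const_mul_mul {f : ℝ → ℝ} {f' x : ℝ} (κ : ℝ) (hf : HasDerivAt f f' x) :
    HasDerivAt (fun s => exp (κ * s) * f s) (exp (κ * x) * (κ * f x + f')) x := by
  have hexp : HasDerivAt (fun s => exp (κ * s)) (exp (κ * x) * κ) x :=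
    ((hasDerivAt_id x).const_mul κ).exp.congr_deriv (by simp)
  exact (hexp.mul hf).congr_deriv (by ring)

theorem div_lt_exp_of_strictMono_exp_mul {f : ℝ → ℝ} {κ : ℝ}
    (hmono : StrictMono fun s => exp (κ * s) * f s) {x : ℝ} (hx : 0 < f x) :
    f (x - 1) / f x < exp κ := by
  have hstep : exp (κ * (x - 1)) * f (x - 1) < exp (κ * (x - 1)) * (exp κ * f x) := by
    calc exp (κ * (x - 1)) * f (x - 1) < exp (κ * x) * f x := hmono (sub_one_lt x)
      _ = exp (κ * (x - 1)) * (exp κ * f x) := by rw [← mul_assoc, ← exp_add]; ring_nf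
  rw [div_lt_iff₀ hx]
  exact lt_of_mul_lt_mul_left hstep (exp_pos _).le

theorem stmt_12_general (c d μ₃ : ℝ) (hc : 0 < c) (hd : 0 < d)
    (I q : ℝ → ℝ) (hI : Differentiable ℝ I) (hIpos : ∀ ς, 0 < I ς)
    (hq : ∀ ς, 0 ≤ q ς)
    (heq : ∀ ς, c * deriv I ς =
      d * (I (ς + 1) - 2 * I ς + I (ς - 1)) + q ς * I ς - μ₃ * I ς)
    (κ : ℝ) (hκ : κ = (2 * d + μ₃) / c) :
    (∀ ς, 0 < deriv (fun s => Real.exp (κ * s) * I s) ς) ∧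
    StrictMono (fun s => Real.exp (κ * s) * I s) ∧
    (∀ ς, I (ς - 1) / I ς < Real.exp κ) := by
  have hκc : κ * c = 2 * d + μ₃ := by rw [hκ]; field_simp
  have hgrowth : ∀ ς, 0 < κ * I ς + deriv I ς := by
    intro ς
    have hrearr : c * (κ * I ς + deriv I ς) = d * (I (ς + 1) + I (ς - 1)) + q ς * I ς := by
      linear_combination heq ς + I ς * hκc
    have hrhs : 0 < d * (I (ς + 1) + I (ς - 1)) + q ς * I ς := by
      have := hIpos (ς + 1); have := hIpos (ς - 1)
      positivity [hq ς, hIpos ς]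
    exact pos_of_mul_pos_right (hrearr ▸ hrhs) hc.le
  have hpos : ∀ ς, 0 < deriv (fun s => exp (κ * s) * I s) ς := fun ς => by
    rw [(hasDerivAt_exp_const_mul_mul κ (hI ς).hasDerivAt).deriv]
    exact mul_pos (exp_pos _) (hgrowth ς)
  have hmono : StrictMono fun s => exp (κ * s) * I s := strictMono_of_deriv_pos hpos
  exact ⟨hpos, hmono, fun ς => div_lt_exp_of_strictMono_exp_mul hmono (hIpos ς)⟩

theorem stmt_12 (c d μ₃ : ℝ) (hc : 0 < c) (hd : 0 < d) (hμ : 0 < μ₃)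
    (I q : ℝ → ℝ) (hI : Differentiable ℝ I) (hIpos : ∀ ς, 0 < I ς)
    (hq : ∀ ς, 0 ≤ q ς)
    (heq : ∀ ς, c * deriv I ς =
      d * (I (ς + 1) - 2 * I ς + I (ς - 1)) + q ς * I ς - μ₃ * I ς)
    (κ : ℝ) (hκ : κ = (2 * d + μ₃) / c) :
    (∀ ς, 0 < deriv (fun s => Real.exp (κ * s) * I s) ς) ∧
    StrictMono (fun s => Real.exp (κ * s) * I s) ∧
    (∀ ς, I (ς - 1) / I ς < Real.exp κ) :=
  stmt_12_general c d μ₃ hc hd I q hI hIpos hq heq κ hκ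
end

section
/- Let c, d, μ₃ > 0 and I : ℝ → ℝ be differentiable and nonnegative satisfying cI'(ς) = d(I(ς+1) - 2I(ς) + I(ς-1)) + (β₁S(ς) + β₂V(ς))I(ς) - μ₃I(ς) with S, V ≥ 0 and β₁, β₂ ≥ 0. If I(ς₁) = 0 for some ς₁ and I(ς) > 0 for all ς < ς₁, then I(ς₁+1) + I(ς₁-1) = 0, which forces I(ς₁-1) = 0, contradicting positivity; hence no such ς₁ exists (i.e., if I > 0 on some ray (-∞, a) then I > 0 on all of ℝ). -/
theorem stmt_18 (c d μ₃ β₁ β₂ : ℝ) (hc : 0 < c) (hd : 0 < d) (hμ : 0 < μ₃)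
    (hβ₁ : 0 ≤ β₁) (hβ₂ : 0 ≤ β₂)
    (S V I : ℝ → ℝ) (hS0 : ∀ ς, 0 ≤ S ς) (hV0 : ∀ ς, 0 ≤ V ς) (hI0 : ∀ ς, 0 ≤ I ς)
    (hI : Differentiable ℝ I)
    (heq : ∀ ς, c * deriv I ς =
      d * (I (ς + 1) - 2 * I ς + I (ς - 1)) + (β₁ * S ς + β₂ * V ς) * I ς - μ₃ * I ς)
    (a : ℝ) (hpos : ∀ ς < a, 0 < I ς) :
    ∀ ς, 0 < I ς := by
  intro ς
  by_contra h
  have hz : I ς = 0 := le_antisymm (not_lt.mp h) (hI0 ς)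
  have key : ∀ t, I t = 0 → I (t - 1) = 0 := by
    intro t ht
    have hmin : IsLocalMin I t := by
      have : IsMinOn I Set.univ t := by
        intro x _
        simp only [Set.mem_setOf_eq, ht]
        exact hI0 x
      exact this.isLocalMin Filter.univ_mem
    have hderiv : deriv I t = 0 := hmin.deriv_eq_zero
    have hteq := heq t
    rw [hderiv, ht] at hteq
    have h1 : d * (I (t+1) + I (t-1)) = 0 := by linarith
    have h2 : I (t+1) + I (t-1) = 0 := by
      rcases mul_eq_zero.mp h1 with h' | h'
      · exact absurd h' hd.ne'
      · exact h'
    have := hI0 (t+1); have := hI0 (t-1)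
    linarith
  have hall : ∀ n : ℕ, I (ς - n) = 0 := by
    intro n
    induction n with
    | zero => simpa using hz
    | succ k ih =>
        have := key _ ih
        rw [show (ς - k) - 1 = ς - ((k : ℕ) + 1 : ℕ) by push_cast; ring] at this
        exact this
  obtain ⟨n, hn⟩ := exists_nat_gt (ς - a)
  have hlt : ς - n < a := by linarith
  have := hpos _ hlt
  rw [hall n] at this
  exact lt_irrefl 0 this
end
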